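/- arXiv:2412.13358 — 2 statements merged into one kernel-verified Lean document; each statement's English description precedes it below -/
import Mathlib

section
/- Expansion lemma: Let P be a finite set in a metric space and S ⊆ P. Suppose every point p ∈ P \ S lies in a ball B of radius ε·ρ such that |B ∩ S| ≥ z+1. If C₁,…,C_k are balls of radius r covering all of S except at most z points, then the expanded balls C₁*,…,C_k* with the same centers and radius r + 2ε·ρ cover all of P except at most z points (the same outliers). -/
open Metric
open scoped Classical

section Expansion

variable {X : Type*} [MetricSpace X]

lemma lt_dist_of_add_two_mul_lt_dist {p s a q : X} {r δ : ℝ} (hp : dist p a ≤ δ)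
    (hs : dist s a ≤ δ) (h : r + 2 * δ < dist p q) : r < dist s q := by
  have := dist_triangle4 p a s q
  rw [dist_comm a s] at this
  linarith

lemma filter_dist_le_subset_filter_far {k : ℕ} (c : Fin k → X) (S : Finset X) {p a : X}
    {r δ : ℝ} (hp : dist p a ≤ δ) (hfar : ∀ i, r + 2 * δ < dist p (c i)) :
    S.filter (fun s => dist s a ≤ δ) ⊆ S.filter (fun s => ∀ i, r < dist s (c i)) := by
  intro s hs
  rw [Finset.mem_filter] at hs ⊢
  exact ⟨hs.1, fun i => lt_dist_of_add_two_mul_lt_dist hp hs.2 (hfar i)⟩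

/-- A point of `P \ S` far from every expanded ball would drag its whole witness ball of
`z + 1` points of `S` outside the original balls, exceeding the `z` allowed outliers. -/
theorem filter_far_expanded_subset_filter_far {k : ℕ} (c : Fin k → X) {P S : Finset X}
    {r δ : ℝ} {z : ℕ} (hδ : 0 ≤ δ)
    (hfull : ∀ p ∈ P \ S, ∃ a : X, dist p a ≤ δ ∧
      z + 1 ≤ (S.filter (fun s => dist s a ≤ δ)).card)
    (hcov : (S.filter (fun s => ∀ i, r < dist s (c i))).card ≤ z) :
    P.filter (fun p => ∀ i, r + 2 * δ < dist p (c i)) ⊆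
      S.filter (fun s => ∀ i, r < dist s (c i)) := by
  intro p hp
  obtain ⟨hpP, hfar⟩ := Finset.mem_filter.mp hp
  by_cases hpS : p ∈ S
  · exact Finset.mem_filter.mpr ⟨hpS, fun i => by linarith [hfar i]⟩
  · obtain ⟨a, hpa, hcard⟩ := hfull p (Finset.mem_sdiff.mpr ⟨hpP, hpS⟩)
    have := Finset.card_le_card (filter_dist_le_subset_filter_far c S hpa hfar)
    omega

end Expansion

theorem stmt4_general {X : Type*} [MetricSpace X] (k z : ℕ) (ε ρ r : ℝ)
    (hε : 0 ≤ ε) (hρ : 0 ≤ ρ)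
    (P S : Finset X)
    (hfull : ∀ p ∈ P \ S, ∃ c : X, dist p c ≤ ε * ρ ∧
      z + 1 ≤ (S.filter (fun s => dist s c ≤ ε * ρ)).card)
    (c : Fin k → X)
    (hcov : (S.filter (fun s => ∀ i, r < dist s (c i))).card ≤ z) :
    (P.filter (fun p => ∀ i, r + 2 * ε * ρ < dist p (c i))) ⊆
      (S.filter (fun s => ∀ i, r < dist s (c i))) ∧
    (P.filter (fun p => ∀ i, r + 2 * ε * ρ < dist p (c i))).card ≤ z := by
  have hsub := filter_far_expanded_subset_filter_far c (mul_nonneg hε hρ) hfull hcov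
  rw [mul_assoc]
  exact ⟨hsub, (Finset.card_le_card hsub).trans hcov⟩

theorem stmt4 {X : Type*} [MetricSpace X] (k z : ℕ) (ε ρ r : ℝ)
    (hε : 0 ≤ ε) (hρ : 0 ≤ ρ) (hr : 0 ≤ r)
    (P S : Finset X) (hSP : S ⊆ P)
    (hfull : ∀ p ∈ P \ S, ∃ c : X, dist p c ≤ ε * ρ ∧
      z + 1 ≤ (S.filter (fun s => dist s c ≤ ε * ρ)).card)
    (c : Fin k → X)
    (hcov : (S.filter (fun s => ∀ i, r < dist s (c i))).card ≤ z) :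
    (P.filter (fun p => ∀ i, r + 2 * ε * ρ < dist p (c i))) ⊆
      (S.filter (fun s => ∀ i, r < dist s (c i))) ∧
    (P.filter (fun p => ∀ i, r + 2 * ε * ρ < dist p (c i))).card ≤ z :=
  stmt4_general k z ε ρ r hε hρ P S hfull c hcov
end

section
/- Diameter approximation by a dense subset with full balls: let P be a finite set in a metric space and S ⊆ P such that every p ∈ P \ S is within distance 2ερ of at least z+1 points of S. Then diam_z(S) ≥ diam_z(P) − 4ερ, where diam_z(Q) denotes the minimum over all choices of z outliers of the diameter of the remaining points. -/
/-!
Remove the same `z` outliers `Q ⊆ S` from both sets. A point of `P \ S` has `z + 1` points of `S`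
within `2ερ`, so at least one of them survives in `S \ Q`; hence `P \ Q` lies in the closed
`2ερ`-thickening of `S \ Q`, whose diameter is at most `diam (S \ Q) + 4ερ`.
-/

open Metric
open scoped Classical

noncomputable def diamz {X : Type*} [MetricSpace X] (z : ℕ) (P : Finset X) : ℝ :=
  sInf {D : ℝ | ∃ Q : Finset X, Q ⊆ P ∧ Q.card = z ∧
    D = Metric.diam (↑(P \ Q) : Set X)}

section MetricSpace

variable {X : Type*} [MetricSpace X] {z : ℕ}

lemma diamz_le_diam_sdiff {P Q : Finset X} (hQP : Q ⊆ P) (hQ : Q.card = z) :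
    diamz z P ≤ diam (↑(P \ Q) : Set X) :=
  csInf_le ⟨0, by rintro _ ⟨_, _, _, rfl⟩; exact diam_nonneg⟩ ⟨Q, hQP, hQ, rfl⟩

lemma le_diamz {S : Finset X} {a : ℝ} (hz : z ≤ S.card)
    (h : ∀ Q ⊆ S, Q.card = z → a ≤ diam (↑(S \ Q) : Set X)) : a ≤ diamz z S := by
  obtain ⟨Q₀, hQ₀S, hQ₀⟩ := Finset.exists_subset_card_eq hz
  exact le_csInf ⟨_, Q₀, hQ₀S, hQ₀, rfl⟩ fun _ ⟨Q, hQS, hQ, hD⟩ => hD ▸ h Q hQS hQ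

end MetricSpace

section PseudoMetricSpace

variable {X : Type*} [PseudoMetricSpace X]

lemma exists_mem_sdiff_dist_le_two_mul {S Q : Finset X} {p c : X} {r : ℝ}
    (hpc : dist p c ≤ r) (hcard : Q.card < (S.filter (fun s => dist s c ≤ r)).card) :
    ∃ s ∈ S \ Q, dist p s ≤ 2 * r := by
  obtain ⟨s, hs, hsQ⟩ := Finset.exists_mem_notMem_of_card_lt_card hcard
  rw [Finset.mem_filter] at hs
  refine ⟨s, Finset.mem_sdiff.2 ⟨hs.1, hsQ⟩, ?_⟩
  calc dist p s ≤ dist p c + dist s c := dist_triangle_right _ _ _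
    _ ≤ 2 * r := by linarith [hs.2]

lemma coe_sdiff_subset_cthickening_coe_sdiff {z : ℕ} {r : ℝ} {P S Q : Finset X} (hQ : Q.card ≤ z)
    (hfull : ∀ p ∈ P \ S, ∃ c : X, dist p c ≤ r ∧
      z + 1 ≤ (S.filter (fun s => dist s c ≤ r)).card) :
    (↑(P \ Q) : Set X) ⊆ cthickening (2 * r) ↑(S \ Q) := by
  intro p hp
  rw [Finset.mem_coe, Finset.mem_sdiff] at hp
  by_cases hpS : p ∈ S
  · exact self_subset_cthickening _ (Finset.mem_coe.2 (Finset.mem_sdiff.2 ⟨hpS, hp.2⟩))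
  · obtain ⟨c, hpc, hcard⟩ := hfull p (Finset.mem_sdiff.2 ⟨hp.1, hpS⟩)
    obtain ⟨s, hs, hps⟩ := exists_mem_sdiff_dist_le_two_mul hpc ((Nat.lt_succ_of_le hQ).trans_le hcard)
    exact mem_cthickening_of_dist_le p s _ _ (Finset.mem_coe.2 hs) hps

end PseudoMetricSpace

theorem stmt10 {X : Type*} [MetricSpace X] (z : ℕ) (ε ρ : ℝ)
    (hε : 0 ≤ ε) (hρ : 0 ≤ ρ)
    (P S : Finset X) (hSP : S ⊆ P) (hz : z ≤ S.card)
    (hfull : ∀ p ∈ P \ S, ∃ c : X, dist p c ≤ ε * ρ ∧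
      z + 1 ≤ (S.filter (fun s => dist s c ≤ ε * ρ)).card) :
    diamz z P - 4 * ε * ρ ≤ diamz z S := by
  have hr : 0 ≤ ε * ρ := mul_nonneg hε hρ
  refine le_diamz hz fun Q hQS hQ => ?_
  have hP := diamz_le_diam_sdiff (hQS.trans hSP) hQ
  have hcover := coe_sdiff_subset_cthickening_coe_sdiff hQ.le hfull
  have hthick := diam_mono hcover (S \ Q).finite_toSet.isBounded.cthickening
  have hS := diam_cthickening_le (↑(S \ Q) : Set X) (by linarith : 0 ≤ 2 * (ε * ρ))
  linarith
end
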